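/- arXiv:2605.30891 — 5 statements merged into one kernel-verified Lean document; each statement's English description precedes it below -/
import Mathlib

section
/- For every k ≥ 1, min_{0 ≤ i < k} ‖∇f(x_i)‖ ≤ (1/k) · (∑_{i=0}^{k−1} λ_i)^{1/p} · (2Δ + L ∑_{i=0}^{k−1} (L/λ_i)^{2/(p−2)})^{(p−1)/p}, for any choice of positive parameters λ_0, …, λ_{k−1}. -/
/-! The step satisfies `∇f(x_k) = -λ_k ‖s_k‖^(p-2) s_k`, so `⟪∇f(x_k), s_k⟫ = -λ_k ‖s_k‖^p` and
`‖∇f(x_k)‖ = λ_k ‖s_k‖^(p-1)`. The quadratic upper bound given by the `L`-Lipschitz gradient and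
the Young-type inequality `L r² ≤ λ r^p + L (L/λ)^(2/(p-2))` yield the sufficient decrease
`2 f(x_{k+1}) + λ_k ‖s_k‖^p ≤ 2 f(x_k) + L (L/λ_k)^(2/(p-2))`; telescoping bounds
`∑ λ_i ‖s_i‖^p` by `2Δ + L ∑ (L/λ_i)^(2/(p-2))`. Weighted Hölder with exponent `p/(p-1)` turns
this into a bound on `∑ ‖∇f(x_i)‖ = ∑ λ_i ‖s_i‖^(p-1)`, and the minimum is at most the mean. -/

open scoped Classical

open Finset

section Descent

variable {E : Type*} [NormedAddCommGroup E] [InnerProductSpace ℝ E] [CompleteSpace E]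
  {f : E → ℝ} {f' : E → E}

theorem hasDerivAt_comp_add_smul (hf : ∀ y, HasGradientAt f (f' y) y) (x v : E) (t : ℝ) :
    HasDerivAt (fun t : ℝ => f (x + t • v)) (inner ℝ (f' (x + t • v)) v) t := by
  have hline : HasDerivAt (fun t : ℝ => x + t • v) v t := by
    simpa using ((hasDerivAt_id t).smul_const v).const_add x
  have h := (hf (x + t • v)).hasFDerivAt.comp_hasDerivAt t hline
  simp only [InnerProductSpace.toDual_apply_apply] at h
  exact h

theorem le_add_inner_add_of_lipschitz_gradient (hf : ∀ y, HasGradientAt f (f' y) y) {L : ℝ}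
    (hlip : ∀ y z, ‖f' y - f' z‖ ≤ L * ‖y - z‖) (x v : E) :
    f (x + v) ≤ f x + inner ℝ (f' x) v + L / 2 * ‖v‖ ^ 2 := by
  set φ : ℝ → ℝ := fun t => f (x + t • v) - t * inner ℝ (f' x) v - t ^ 2 * (L / 2 * ‖v‖ ^ 2)
  have hφ : ∀ t, HasDerivAt φ
      (inner ℝ (f' (x + t • v)) v - inner ℝ (f' x) v - t * (L * ‖v‖ ^ 2)) t := by
    intro t
    have hlinear : HasDerivAt (fun t : ℝ => t * inner ℝ (f' x) v) (inner ℝ (f' x) v) t := by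
      simpa using (hasDerivAt_id t).mul_const (inner ℝ (f' x) v)
    have hquad : HasDerivAt (fun t : ℝ => t ^ 2 * (L / 2 * ‖v‖ ^ 2)) (t * (L * ‖v‖ ^ 2)) t := by
      refine ((hasDerivAt_pow 2 t).mul_const (L / 2 * ‖v‖ ^ 2)).congr_deriv ?_
      push_cast
      ring
    exact ((hasDerivAt_comp_add_smul hf x v t).sub hlinear).sub hquad
  have hφ_nonpos : ∀ t ∈ interior (Set.Icc (0 : ℝ) 1),
      inner ℝ (f' (x + t • v)) v - inner ℝ (f' x) v - t * (L * ‖v‖ ^ 2) ≤ 0 := by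
    intro t ht
    rw [interior_Icc] at ht
    rw [sub_nonpos]
    have hlip_t : ‖f' (x + t • v) - f' x‖ ≤ L * (t * ‖v‖) := by
      simpa [norm_smul, abs_of_pos ht.1] using hlip (x + t • v) x
    calc inner ℝ (f' (x + t • v)) v - inner ℝ (f' x) v
        = inner ℝ (f' (x + t • v) - f' x) v := (inner_sub_left _ _ _).symm
      _ ≤ ‖f' (x + t • v) - f' x‖ * ‖v‖ := real_inner_le_norm _ _
      _ ≤ L * (t * ‖v‖) * ‖v‖ := by gcongr
      _ = t * (L * ‖v‖ ^ 2) := by ring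
  have hanti : AntitoneOn φ (Set.Icc 0 1) :=
    antitoneOn_of_hasDerivWithinAt_nonpos (convex_Icc 0 1)
      (fun t _ => (hφ t).continuousAt.continuousWithinAt)
      (fun t _ => (hφ t).hasDerivWithinAt) hφ_nonpos
  have h01 := hanti (Set.left_mem_Icc.mpr zero_le_one) (Set.right_mem_Icc.mpr zero_le_one)
    zero_le_one
  simp only [φ, zero_smul, add_zero, one_smul, zero_mul, one_pow, one_mul, sub_zero,
    ne_eq, OfNat.ofNat_ne_zero, not_false_eq_true, zero_pow] at h01
  linarith

end Descent

theorem mul_sq_le_mul_rpow_add {L c a p : ℝ} (hL : 0 ≤ L) (hc : 0 < c) (ha : 0 ≤ a)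
    (hp : 2 < p) : L * a ^ 2 ≤ c * a ^ p + L * (L / c) ^ (2 / (p - 2)) := by
  have hp2 : p - 2 ≠ 0 := by linarith
  rcases le_or_gt (L / c) (a ^ (p - 2)) with h | h
  · have hsplit : a ^ p = a ^ (p - 2) * a ^ 2 := by
      rw [← Real.rpow_natCast, ← Real.rpow_add' ha (ne_of_gt (by push_cast; linarith))]
      norm_num
    calc L * a ^ 2 = c * (L / c * a ^ 2) := by field_simp
      _ ≤ c * (a ^ (p - 2) * a ^ 2) := by gcongr
      _ ≤ c * a ^ p + L * (L / c) ^ (2 / (p - 2)) := by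
        rw [← hsplit]; have := Real.rpow_nonneg (div_nonneg hL hc.le) (2 / (p - 2)); nlinarith
  · have hsq : a ^ 2 ≤ (L / c) ^ (2 / (p - 2)) := by
      calc a ^ 2 = (a ^ (p - 2)) ^ (2 / (p - 2)) := by
            rw [← Real.rpow_mul ha, mul_div_cancel₀ _ hp2]; norm_cast
        _ ≤ (L / c) ^ (2 / (p - 2)) := by
            gcongr
    have := Real.rpow_nonneg ha p
    nlinarith [mul_le_mul_of_nonneg_left hsq hL]

section Step

variable {E : Type*} [NormedAddCommGroup E] [InnerProductSpace ℝ E]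

theorem eq_neg_smul_of_regularized_step {lam p : ℝ} (hlam : 0 < lam) (hp : 1 < p) {g s : E}
    (hs : s = if g = 0 then 0 else -((lam * ‖g‖ ^ (p - 2)) ^ (-(1 : ℝ) / (p - 1))) • g) :
    g = -(lam * ‖s‖ ^ (p - 2)) • s := by
  by_cases hg : g = 0
  · simp [hs, hg]
  have hn : 0 < ‖g‖ := norm_pos_iff.mpr hg
  have hbase : 0 < lam * ‖g‖ ^ (p - 2) := by positivity
  set t := (lam * ‖g‖ ^ (p - 2)) ^ (-(1 : ℝ) / (p - 1)) with ht_def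
  have ht : 0 < t := Real.rpow_pos_of_pos hbase _
  have hs' : s = -t • g := by rw [hs, if_neg hg]
  have htp : t ^ (p - 1) = (lam * ‖g‖ ^ (p - 2))⁻¹ := by
    rw [ht_def, ← Real.rpow_mul hbase.le, div_mul_cancel₀ _ (by linarith : p - 1 ≠ 0),
      Real.rpow_neg_one]
  have hscale : lam * (t * ‖g‖) ^ (p - 2) * t = 1 := by
    have hpow : t ^ (p - 2) * t = t ^ (p - 1) := by
      rw [← Real.rpow_add_one ht.ne']; ring_nf
    calc lam * (t * ‖g‖) ^ (p - 2) * t = lam * ‖g‖ ^ (p - 2) * (t ^ (p - 2) * t) := by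
          rw [Real.mul_rpow ht.le hn.le]; ring
      _ = 1 := by rw [hpow, htp, mul_inv_cancel₀ hbase.ne']
  rw [hs', norm_smul, norm_neg, Real.norm_eq_abs, abs_of_pos ht, smul_smul]
  rw [neg_mul_neg, hscale, one_smul]

variable {c p : ℝ} {g s : E}

theorem norm_eq_of_eq_neg_smul (hc : 0 ≤ c) (hp : 1 < p) (h : g = -(c * ‖s‖ ^ (p - 2)) • s) :
    ‖g‖ = c * ‖s‖ ^ (p - 1) := by
  rw [h, norm_smul, norm_neg, Real.norm_eq_abs, abs_of_nonneg (by positivity), mul_assoc,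
    ← Real.rpow_add_one' (norm_nonneg s) (by linarith)]
  ring_nf

theorem inner_eq_of_eq_neg_smul (hp : 0 < p) (h : g = -(c * ‖s‖ ^ (p - 2)) • s) :
    inner ℝ g s = -(c * ‖s‖ ^ p) := by
  rw [h, real_inner_smul_left, real_inner_self_eq_norm_sq, ← Real.rpow_natCast, neg_mul,
    mul_assoc, ← Real.rpow_add' (norm_nonneg s) (by norm_num; linarith)]
  norm_num

end Step

theorem sum_range_le_sub_add_of_succ_add_le {a u b : ℕ → ℝ} {m : ℝ} (hm : ∀ i, m ≤ a i)
    (h : ∀ i, a (i + 1) + u i ≤ a i + b i) (k : ℕ) :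
    ∑ i ∈ range k, u i ≤ a 0 - m + ∑ i ∈ range k, b i := by
  suffices ∑ i ∈ range k, u i ≤ a 0 - a k + ∑ i ∈ range k, b i by linarith [hm k]
  induction k with
  | zero => simp
  | succ k ih =>
    rw [sum_range_succ, sum_range_succ]
    linarith [h k]

theorem sum_mul_rpow_sub_one_le {ι : Type*} (s : Finset ι) {p : ℝ} (hp : 1 < p) {w r : ι → ℝ}
    (hw : ∀ i, 0 ≤ w i) (hr : ∀ i, 0 ≤ r i) :
    ∑ i ∈ s, w i * r i ^ (p - 1) ≤
      (∑ i ∈ s, w i) ^ ((1 : ℝ) / p) * (∑ i ∈ s, w i * r i ^ p) ^ ((p - 1) / p) := by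
  have hq : 1 ≤ p / (p - 1) := by rw [le_div_iff₀ (by linarith)]; linarith
  have hpow : ∀ i, (r i ^ (p - 1)) ^ (p / (p - 1)) = r i ^ p := fun i => by
    rw [← Real.rpow_mul (hr i), mul_div_cancel₀ _ (by linarith)]
  have H := Real.inner_le_weight_mul_Lp_of_nonneg s hq w (fun i => r i ^ (p - 1)) hw
    (fun i => Real.rpow_nonneg (hr i) _)
  simp only [hpow, inv_div] at H
  convert H using 3
  field_simp
  ring

theorem sufficient_decrease_of_eq_neg_smul {E : Type*} [NormedAddCommGroup E] [InnerProductSpace ℝ E]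
    [CompleteSpace E] {f : E → ℝ} {f' : E → E} (hf : ∀ y, HasGradientAt f (f' y) y) {L : ℝ}
    (hL : 0 ≤ L) (hlip : ∀ y z, ‖f' y - f' z‖ ≤ L * ‖y - z‖) {c p : ℝ} (hc : 0 < c)
    (hp : 2 < p) {x s : E} (h : f' x = -(c * ‖s‖ ^ (p - 2)) • s) :
    2 * f (x + s) + c * ‖s‖ ^ p ≤ 2 * f x + L * (L / c) ^ (2 / (p - 2)) := by
  have hdescent := le_add_inner_add_of_lipschitz_gradient hf hlip x s
  rw [inner_eq_of_eq_neg_smul (by linarith) h] at hdescent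
  linarith [mul_sq_le_mul_rpow_add hL hc (norm_nonneg s) hp]

/-- General gradient-norm bound for higher-order regularized gradient descent:
for all `k ≥ 1`,
`min_{0 ≤ i < k} ‖∇f(x_i)‖ ≤ (1/k) (∑_{i<k} λ_i)^{1/p} (2Δ + L ∑_{i<k} (L/λ_i)^{2/(p-2)})^{(p-1)/p}`. -/
theorem hor_gd_rate_general
    {E : Type*} [NormedAddCommGroup E] [InnerProductSpace ℝ E] [CompleteSpace E]
    (f : E → ℝ) (f' : E → E)
    (hf : ∀ y, HasGradientAt f (f' y) y)
    (L : ℝ) (hL : 0 < L)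
    (hlip : ∀ y z, ‖f' y - f' z‖ ≤ L * ‖y - z‖)
    (hbdd : BddBelow (Set.range f))
    (p : ℝ) (hp : 2 < p)
    (lam : ℕ → ℝ) (hlam : ∀ k, 0 < lam k)
    (x s : ℕ → E)
    (hs : ∀ k, s k = if f' (x k) = 0 then 0
      else -((lam k * ‖f' (x k)‖ ^ (p - 2)) ^ (-(1 : ℝ) / (p - 1))) • f' (x k))
    (hx : ∀ k, x (k + 1) = x k + s k)
    (Δ : ℝ) (hΔ : Δ = f (x 0) - ⨅ y, f y)
    (k : ℕ) (hk : 1 ≤ k) :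
    (Finset.range k).inf' (Finset.nonempty_range_iff.mpr (by omega))
        (fun i => ‖f' (x i)‖) ≤
      (1 / (k : ℝ)) * (∑ i ∈ Finset.range k, lam i) ^ ((1 : ℝ) / p) *
        (2 * Δ + L * ∑ i ∈ Finset.range k, (L / lam i) ^ (2 / (p - 2))) ^ ((p - 1) / p) := by
  have hp₁ : 1 < p := by linarith
  have hgrad i : f' (x i) = -(lam i * ‖s i‖ ^ (p - 2)) • s i :=
    eq_neg_smul_of_regularized_step (hlam i) hp₁ (hs i)
  have henergy : ∑ i ∈ range k, lam i * ‖s i‖ ^ p ≤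
      2 * Δ + L * ∑ i ∈ range k, (L / lam i) ^ (2 / (p - 2)) := by
    have := sum_range_le_sub_add_of_succ_add_le (a := fun i => 2 * f (x i))
      (m := 2 * ⨅ y, f y) (fun i => by gcongr; exact ciInf_le hbdd (x i))
      (fun i => hx i ▸ sufficient_decrease_of_eq_neg_smul hf hL.le hlip (hlam i) hp (hgrad i)) k
    rw [hΔ, mul_sum]
    linarith
  have hholder : ∑ i ∈ range k, ‖f' (x i)‖ ≤ (∑ i ∈ range k, lam i) ^ ((1 : ℝ) / p) *
      (∑ i ∈ range k, lam i * ‖s i‖ ^ p) ^ ((p - 1) / p) := by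
    simp only [fun i => norm_eq_of_eq_neg_smul (hlam i).le hp₁ (hgrad i)]
    exact sum_mul_rpow_sub_one_le _ hp₁ (fun i => (hlam i).le) (fun i => norm_nonneg _)
  have hk_pos : (0 : ℝ) < k := by exact_mod_cast hk
  calc _ ≤ 1 / (k : ℝ) * ∑ i ∈ range k, ‖f' (x i)‖ := by
        rw [one_div_mul_eq_div, le_div_iff₀ hk_pos, mul_comm]
        simpa using card_nsmul_le_sum (range k) (fun i => ‖f' (x i)‖) _
          (fun i hi => inf'_le (fun i => ‖f' (x i)‖) hi)
    _ ≤ 1 / (k : ℝ) * ((∑ i ∈ range k, lam i) ^ ((1 : ℝ) / p) *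
        (∑ i ∈ range k, lam i * ‖s i‖ ^ p) ^ ((p - 1) / p)) := by gcongr
    _ ≤ _ := by
        have hlam_sum : 0 ≤ ∑ i ∈ range k, lam i := sum_nonneg fun i _ => (hlam i).le
        rw [← mul_assoc]
        gcongr
        exact sum_nonneg fun i _ => by have := hlam i; positivity
end

section
/- For every index i, the Newton-type iterates satisfy f(x_{i+1}) − f(x_i) ≤ (M/6)‖s_i‖³ − (λ_i/4)‖s_i‖^p and ‖∇f(x_{i+1})‖ ≤ (M/2)‖s_i‖² + (3/2)λ_i‖s_i‖^{p−1}. -/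
/-!
Taylor's theorem with a Lipschitz Hessian bounds the gradient remainder by `(M/2)‖s‖²` and the
function remainder by `(M/6)‖s‖³`. Writing `r = g + H s + λ‖s‖^{p-2} s` for the residual of the
step, `‖r‖ ≤ (λ/2)‖s‖^{p-1}` gives `⟪H s, s⟫ ≤ -(λ/2)‖s‖^p - ⟪g, s⟫`, so with `⟪g, s⟫ ≤ 0` the
quadratic model decreases by at least `(λ/4)‖s‖^p`; and `∇f(x + s)` is the gradient remainder
plus `r` minus `λ‖s‖^{p-2} s`.
-/

open scoped RealInnerProductSpace

open Set

theorem norm_le_of_norm_deriv_le_mul_pow {F : Type*} [NormedAddCommGroup F] [NormedSpace ℝ F]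
    {g g' : ℝ → F} {K : ℝ} (n : ℕ) (h0 : g 0 = 0)
    (hg : ∀ t ∈ Icc (0 : ℝ) 1, HasDerivAt g (g' t) t)
    (hbound : ∀ t ∈ Icc (0 : ℝ) 1, ‖g' t‖ ≤ K * t ^ n) :
    ‖g 1‖ ≤ K / (n + 1) := by
  have hB : ∀ t : ℝ, HasDerivAt (fun t => K / (n + 1) * t ^ (n + 1)) (K * t ^ n) t := fun t =>
    ((hasDerivAt_pow (n + 1) t).const_mul _).congr_deriv (by push_cast; field_simp)
  simpa using image_norm_le_of_norm_deriv_right_le_deriv_boundary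
    (fun t ht => (hg t ht).continuousAt.continuousWithinAt)
    (fun t ht => (hg t (Ico_subset_Icc_self ht)).hasDerivWithinAt)
    (by simp [h0]) hB (fun t ht => hbound t (Ico_subset_Icc_self ht)) (right_mem_Icc.2 zero_le_one)

theorem hasDerivAt_add_smul {E : Type*} [NormedAddCommGroup E] [NormedSpace ℝ E] (x u : E)
    (t : ℝ) : HasDerivAt (fun t : ℝ => x + t • u) u t := by
  simpa using ((hasDerivAt_id t).smul_const u).const_add x

theorem norm_sub_sub_le_of_lipschitz_fderiv {E F : Type*} [NormedAddCommGroup E]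
    [NormedSpace ℝ E] [NormedAddCommGroup F] [NormedSpace ℝ F] {g : E → F} {D : E → E →L[ℝ] F}
    {M : ℝ} (hg : ∀ y, HasFDerivAt g (D y) y) (hD : ∀ y z, ‖D y - D z‖ ≤ M * ‖y - z‖)
    (x u : E) : ‖g (x + u) - g x - D x u‖ ≤ M / 2 * ‖u‖ ^ 2 := by
  have hderiv : ∀ t : ℝ, HasDerivAt (fun t : ℝ => g (x + t • u) - g x - t • D x u)
      ((D (x + t • u) - D x) u) t := fun t =>
    ((((hg _).comp_hasDerivAt t (hasDerivAt_add_smul x u t)).sub_const (g x)).sub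
      ((hasDerivAt_id t).smul_const (D x u))).congr_deriv (by simp)
  have hbound : ∀ t ∈ Icc (0 : ℝ) 1, ‖(D (x + t • u) - D x) u‖ ≤ M * ‖u‖ ^ 2 * t ^ 1 := by
    intro t ht
    calc ‖(D (x + t • u) - D x) u‖ ≤ ‖D (x + t • u) - D x‖ * ‖u‖ := ContinuousLinearMap.le_opNorm _ _
      _ ≤ M * (t * ‖u‖) * ‖u‖ := by
        gcongr
        simpa [norm_smul, abs_of_nonneg ht.1] using hD (x + t • u) x
      _ = M * ‖u‖ ^ 2 * t ^ 1 := by ring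
  have := norm_le_of_norm_deriv_le_mul_pow 1 (by simp) (fun t _ => hderiv t) hbound
  norm_num at this
  linarith

theorem abs_sub_sub_inner_sub_le_of_norm_grad_remainder_le {E : Type*} [NormedAddCommGroup E]
    [InnerProductSpace ℝ E] [CompleteSpace E] {f : E → ℝ} {f' : E → E} (A : E →L[ℝ] E) {C : ℝ}
    (hf : ∀ y, HasGradientAt f (f' y) y) (x : E)
    (hrem : ∀ v, ‖f' (x + v) - f' x - A v‖ ≤ C * ‖v‖ ^ 2) (u : E) :
    |f (x + u) - f x - ⟪f' x, u⟫ - 1 / 2 * ⟪A u, u⟫| ≤ C / 3 * ‖u‖ ^ 3 := by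
  have hderiv : ∀ t : ℝ, HasDerivAt
      (fun t : ℝ => f (x + t • u) - f x - t * ⟪f' x, u⟫ - t ^ 2 / 2 * ⟪A u, u⟫)
      ⟪f' (x + t • u) - f' x - A (t • u), u⟫ t := by
    intro t
    have hcomp : HasDerivAt (fun t : ℝ => f (x + t • u)) ⟪f' (x + t • u), u⟫ t := by
      have := (hf (x + t • u)).hasFDerivAt.comp_hasDerivAt t (hasDerivAt_add_smul x u t)
      simp only [InnerProductSpace.toDual_apply_apply] at this
      exact this
    refine (((hcomp.sub_const (f x)).sub ((hasDerivAt_id t).mul_const ⟪f' x, u⟫)).sub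
      (((hasDerivAt_pow 2 t).div_const 2).mul_const ⟪A u, u⟫)).congr_deriv ?_
    simp only [map_smul, inner_sub_left, real_inner_smul_left]
    push_cast
    ring
  have hbound : ∀ t ∈ Icc (0 : ℝ) 1,
      ‖⟪f' (x + t • u) - f' x - A (t • u), u⟫‖ ≤ C * ‖u‖ ^ 3 * t ^ 2 := by
    intro t ht
    calc ‖⟪f' (x + t • u) - f' x - A (t • u), u⟫‖
        ≤ ‖f' (x + t • u) - f' x - A (t • u)‖ * ‖u‖ := norm_inner_le_norm _ _
      _ ≤ C * (t * ‖u‖) ^ 2 * ‖u‖ := by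
        gcongr
        simpa [norm_smul, abs_of_nonneg ht.1] using hrem (t • u)
      _ = C * ‖u‖ ^ 3 * t ^ 2 := by ring
  have := norm_le_of_norm_deriv_le_mul_pow 2 (by simp) (fun t _ => hderiv t) hbound
  norm_num [Real.norm_eq_abs] at this
  linarith

section RegularizedStep

variable {E : Type*} [NormedAddCommGroup E] [InnerProductSpace ℝ E] {g s : E} {A : E →L[ℝ] E}
  {lam p : ℝ}

theorem inner_add_half_inner_le_of_regularized_residual (hp : p ≠ 0)
    (hres : ‖g + A s + (lam * ‖s‖ ^ (p - 2)) • s‖ ≤ lam / 2 * ‖s‖ ^ (p - 1))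
    (hdesc : ⟪g, s⟫ ≤ 0) :
    ⟪g, s⟫ + 1 / 2 * ⟪A s, s⟫ ≤ -(lam / 4 * ‖s‖ ^ p) := by
  have hsq : ‖s‖ ^ (p - 2) * ‖s‖ ^ 2 = ‖s‖ ^ p := by
    rw [← Real.rpow_natCast, ← Real.rpow_add' (norm_nonneg s) (by simpa using hp)]
    norm_num
  have hlin : ‖s‖ ^ (p - 1) * ‖s‖ = ‖s‖ ^ p := by
    rw [← Real.rpow_add_one' (norm_nonneg s) (by simpa using hp)]
    norm_num
  have hinner : ⟪g + A s + (lam * ‖s‖ ^ (p - 2)) • s, s⟫ ≤ lam / 2 * ‖s‖ ^ p := by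
    calc _ ≤ ‖g + A s + (lam * ‖s‖ ^ (p - 2)) • s‖ * ‖s‖ := real_inner_le_norm _ _
      _ ≤ lam / 2 * ‖s‖ ^ (p - 1) * ‖s‖ := by gcongr
      _ = lam / 2 * ‖s‖ ^ p := by rw [mul_assoc, hlin]
  rw [inner_add_left, inner_add_left, real_inner_smul_left, real_inner_self_eq_norm_sq,
    mul_assoc, hsq] at hinner
  linarith

theorem norm_le_of_regularized_residual (hp : p ≠ 1) (hlam : 0 ≤ lam)
    (hres : ‖g + A s + (lam * ‖s‖ ^ (p - 2)) • s‖ ≤ lam / 2 * ‖s‖ ^ (p - 1)) (v : E) :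
    ‖v‖ ≤ ‖v - g - A s‖ + 3 / 2 * lam * ‖s‖ ^ (p - 1) := by
  have hsmul : ‖(lam * ‖s‖ ^ (p - 2)) • s‖ = lam * ‖s‖ ^ (p - 1) := by
    rw [norm_smul, Real.norm_of_nonneg (by positivity), mul_assoc,
      ← Real.rpow_add_one' (norm_nonneg s) (by contrapose! hp; linarith)]
    ring_nf
  calc ‖v‖ = ‖(v - g - A s) + (g + A s + (lam * ‖s‖ ^ (p - 2)) • s)
        - (lam * ‖s‖ ^ (p - 2)) • s‖ := by congr 1; abel
    _ ≤ ‖v - g - A s‖ + ‖g + A s + (lam * ‖s‖ ^ (p - 2)) • s‖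
        + ‖(lam * ‖s‖ ^ (p - 2)) • s‖ := norm_sub_le_of_le (norm_add_le _ _) le_rfl
    _ ≤ ‖v - g - A s‖ + 3 / 2 * lam * ‖s‖ ^ (p - 1) := by rw [hsmul]; linarith

end RegularizedStep

theorem hor_newton_step_bounds_general
    {E : Type*} [NormedAddCommGroup E] [InnerProductSpace ℝ E] [CompleteSpace E]
    (f : E → ℝ) (f' : E → E) (H : E → E →L[ℝ] E)
    (hf : ∀ y, HasGradientAt f (f' y) y)
    (hf' : ∀ y, HasFDerivAt f' (H y) y)
    (M : ℝ)
    (hlip : ∀ y z, ‖H y - H z‖ ≤ M * ‖y - z‖)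
    (p : ℝ) (hp : 3 < p)
    (lam : ℕ → ℝ) (hlam : ∀ k, 0 < lam k)
    (x s : ℕ → E)
    (hx : ∀ k, x (k + 1) = x k + s k)
    (hopt : ∀ k, ‖f' (x k) + H (x k) (s k) + (lam k * ‖s k‖ ^ (p - 2)) • s k‖ ≤
      lam k / 2 * ‖s k‖ ^ (p - 1))
    (hdesc : ∀ k, ⟪f' (x k), s k⟫ ≤ 0)
    (i : ℕ) :
    f (x (i + 1)) - f (x i) ≤ M / 6 * ‖s i‖ ^ 3 - lam i / 4 * ‖s i‖ ^ p ∧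
      ‖f' (x (i + 1))‖ ≤ M / 2 * ‖s i‖ ^ 2 + 3 / 2 * lam i * ‖s i‖ ^ (p - 1) := by
  have hgrad := norm_sub_sub_le_of_lipschitz_fderiv hf' hlip (x i)
  rw [hx i]
  constructor
  · have htaylor := abs_sub_sub_inner_sub_le_of_norm_grad_remainder_le (H (x i)) hf (x i)
      hgrad (s i)
    have hmodel := inner_add_half_inner_le_of_regularized_residual (by linarith) (hopt i) (hdesc i)
    linarith [(abs_le.mp htaylor).2]
  · linarith [hgrad (s i),
      norm_le_of_regularized_residual (by linarith) (hlam i).le (hopt i) (f' (x i + s i))]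

/-- One-step bounds for the higher-order regularized Newton method:
`f(x_{i+1}) - f(x_i) ≤ (M/6)‖s_i‖³ - (λ_i/4)‖s_i‖^p` and
`‖∇f(x_{i+1})‖ ≤ (M/2)‖s_i‖² + (3/2)λ_i‖s_i‖^{p-1}`. -/
theorem hor_newton_step_bounds
    {E : Type*} [NormedAddCommGroup E] [InnerProductSpace ℝ E] [CompleteSpace E]
    (f : E → ℝ) (f' : E → E) (H : E → E →L[ℝ] E)
    (hf : ∀ y, HasGradientAt f (f' y) y)
    (hf' : ∀ y, HasFDerivAt f' (H y) y)
    (M : ℝ) (hM : 0 < M)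
    (hlip : ∀ y z, ‖H y - H z‖ ≤ M * ‖y - z‖)
    (p : ℝ) (hp : 3 < p)
    (lam : ℕ → ℝ) (hlam : ∀ k, 0 < lam k)
    (x s : ℕ → E)
    (hx : ∀ k, x (k + 1) = x k + s k)
    (hopt : ∀ k, ‖f' (x k) + H (x k) (s k) + (lam k * ‖s k‖ ^ (p - 2)) • s k‖ ≤
      lam k / 2 * ‖s k‖ ^ (p - 1))
    (hdesc : ∀ k, ⟪f' (x k), s k⟫ ≤ 0)
    (i : ℕ) :
    f (x (i + 1)) - f (x i) ≤ M / 6 * ‖s i‖ ^ 3 - lam i / 4 * ‖s i‖ ^ p ∧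
      ‖f' (x (i + 1))‖ ≤ M / 2 * ‖s i‖ ^ 2 + 3 / 2 * lam i * ‖s i‖ ^ (p - 1) :=
  hor_newton_step_bounds_general f f' H hf hf' M hlip p hp lam hlam x s hx hopt hdesc i
end

section
/- For every index i, the Gauss–Newton step satisfies ‖F_i + J_i s_i‖² − ‖F_i‖² ≤ −2 μ_i ‖F_i‖ ‖s_i‖^p, and consequently ‖F_i + J_i s_i‖ ≤ ‖F_i‖ − μ_i ‖s_i‖^p. -/
/-! Write `r = F + J s` and `g = Jᵀ r + λ ‖s‖^{p-2} s`. Expanding the square gives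
`‖r‖² - ‖F‖² = 2⟪g, s⟫ - 2λ‖s‖^p - ‖J s‖²`, and Cauchy–Schwarz with the inexact optimality
condition bounds `2⟪g, s⟫` by `λ‖s‖^p`, so the model decreases by at least `λ‖s‖^p`.
The second inequality follows by taking square roots, since `‖F‖ > 0`. -/

open scoped RealInnerProductSpace

lemma le_sub_of_sq_sub_sq_le_neg_two_mul {a b m : ℝ} (hb : 0 < b) (h : a ^ 2 - b ^ 2 ≤ -2 * b * m) :
    a ≤ b - m := by
  have hm : 2 * m ≤ b := by nlinarith [sq_nonneg a]
  have hsq : a ^ 2 ≤ (b - m) ^ 2 := by nlinarith [sq_nonneg m]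
  exact (le_abs_self a).trans (abs_le_of_sq_le_sq hsq (by linarith))

section GaussNewton

variable {E V : Type*} [NormedAddCommGroup E] [InnerProductSpace ℝ E] [CompleteSpace E]
  [NormedAddCommGroup V] [InnerProductSpace ℝ V] [CompleteSpace V]

open ContinuousLinearMap

lemma norm_add_apply_sq_sub_norm_sq (L : E →L[ℝ] V) (A : V) (u : E) (c : ℝ) :
    ‖A + L u‖ ^ 2 - ‖A‖ ^ 2 =
      2 * ⟪adjoint L (A + L u) + c • u, u⟫ - 2 * c * ‖u‖ ^ 2 - ‖L u‖ ^ 2 := by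
  rw [norm_add_sq_real, inner_add_left, adjoint_inner_left, real_inner_smul_left,
    real_inner_self_eq_norm_sq, inner_add_left, real_inner_self_eq_norm_sq]
  ring

lemma norm_add_apply_sq_sub_norm_sq_le {L : E →L[ℝ] V} {A : V} {u : E} {p lam : ℝ} (hp : p ≠ 0)
    (hopt : ‖adjoint L (A + L u) + (lam * ‖u‖ ^ (p - 2)) • u‖ ≤ lam / 2 * ‖u‖ ^ (p - 1)) :
    ‖A + L u‖ ^ 2 - ‖A‖ ^ 2 ≤ -(lam * ‖u‖ ^ p) := by
  set g := adjoint L (A + L u) + (lam * ‖u‖ ^ (p - 2)) • u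
  have hgu : ⟪g, u⟫ ≤ lam / 2 * ‖u‖ ^ p :=
    calc ⟪g, u⟫ ≤ ‖g‖ * ‖u‖ := real_inner_le_norm g u
      _ ≤ lam / 2 * ‖u‖ ^ (p - 1) * ‖u‖ := by gcongr
      _ = lam / 2 * ‖u‖ ^ p := by
        rw [mul_assoc, ← Real.rpow_add_one' (norm_nonneg u) (by simpa using hp), sub_add_cancel]
  have hreg : lam * ‖u‖ ^ (p - 2) * ‖u‖ ^ 2 = lam * ‖u‖ ^ p := by
    rw [mul_assoc, ← Real.rpow_add_natCast' (norm_nonneg u) (by simpa using hp)]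
    norm_num
  rw [norm_add_apply_sq_sub_norm_sq L A u (lam * ‖u‖ ^ (p - 2))]
  linarith [sq_nonneg ‖L u‖]

end GaussNewton

theorem gn_model_decrease_general
    {E V : Type*} [NormedAddCommGroup E] [InnerProductSpace ℝ E] [CompleteSpace E]
    [NormedAddCommGroup V] [InnerProductSpace ℝ V] [CompleteSpace V]
    (F : E → V) (J : E → E →L[ℝ] V)
    (p : ℝ) (hp : 2 < p)
    (mu : ℕ → ℝ)
    (x s : ℕ → E)
    (hFpos : ∀ k, 0 < ‖F (x k)‖)
    (lam : ℕ → ℝ) (hlamdef : ∀ k, lam k = 2 * mu k * ‖F (x k)‖)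
    (hopt : ∀ k,
      ‖ContinuousLinearMap.adjoint (J (x k)) (F (x k) + J (x k) (s k)) +
          (lam k * ‖s k‖ ^ (p - 2)) • s k‖ ≤ lam k / 2 * ‖s k‖ ^ (p - 1))
    (i : ℕ) :
    ‖F (x i) + J (x i) (s i)‖ ^ 2 - ‖F (x i)‖ ^ 2 ≤
        -2 * mu i * ‖F (x i)‖ * ‖s i‖ ^ p ∧
      ‖F (x i) + J (x i) (s i)‖ ≤ ‖F (x i)‖ - mu i * ‖s i‖ ^ p := by
  have hdecrease : ‖F (x i) + J (x i) (s i)‖ ^ 2 - ‖F (x i)‖ ^ 2 ≤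
      -2 * ‖F (x i)‖ * (mu i * ‖s i‖ ^ p) := by
    have h := norm_add_apply_sq_sub_norm_sq_le (by linarith) (hopt i)
    rw [hlamdef] at h
    linarith
  exact ⟨by linarith, le_sub_of_sq_sub_sq_le_neg_two_mul (hFpos i) hdecrease⟩

/-- Decrease of the Gauss–Newton model: under the inexact optimality condition,
`‖F_i + J_i s_i‖² - ‖F_i‖² ≤ -2 μ_i ‖F_i‖ ‖s_i‖^p` and consequently
`‖F_i + J_i s_i‖ ≤ ‖F_i‖ - μ_i ‖s_i‖^p`. -/
theorem gn_model_decrease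
    {E V : Type*} [NormedAddCommGroup E] [InnerProductSpace ℝ E] [CompleteSpace E]
    [NormedAddCommGroup V] [InnerProductSpace ℝ V] [CompleteSpace V]
    (F : E → V) (J : E → E →L[ℝ] V)
    (hF : ∀ y, HasFDerivAt F (J y) y)
    (p : ℝ) (hp : 2 < p)
    (mu : ℕ → ℝ) (hmu : ∀ k, 0 < mu k)
    (x s : ℕ → E)
    (hFpos : ∀ k, 0 < ‖F (x k)‖)
    (lam : ℕ → ℝ) (hlamdef : ∀ k, lam k = 2 * mu k * ‖F (x k)‖)
    (hopt : ∀ k,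
      ‖ContinuousLinearMap.adjoint (J (x k)) (F (x k) + J (x k) (s k)) +
          (lam k * ‖s k‖ ^ (p - 2)) • s k‖ ≤ lam k / 2 * ‖s k‖ ^ (p - 1))
    (i : ℕ) :
    ‖F (x i) + J (x i) (s i)‖ ^ 2 - ‖F (x i)‖ ^ 2 ≤
        -2 * mu i * ‖F (x i)‖ * ‖s i‖ ^ p ∧
      ‖F (x i) + J (x i) (s i)‖ ≤ ‖F (x i)‖ - mu i * ‖s i‖ ^ p :=
  gn_model_decrease_general F J p hp mu x s hFpos lam hlamdef hopt i
end

section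
/- For every index i, the Gauss–Newton iterates satisfy ‖F_{i+1}‖ − ‖F_i‖ ≤ (L/2)‖s_i‖² − μ_i‖s_i‖^p and ‖∇f(x_{i+1})‖ ≤ ‖F_i‖ (L‖s_i‖ + 3μ_i‖s_i‖^{p−1}) + (Lσ/2)‖s_i‖², where f(x) = ½‖F(x)‖² so that ∇f(x) = J(x)^⊤ F(x). -/
/-!
Write `m = F_k + J_k s_k` for the linearized residual. Pairing the approximate stationarity
condition with `s_k` gives `⟪m, J_k s_k⟫ ≤ -(λ_k/2)‖s_k‖^p`, hence
`‖m‖² ≤ ‖F_k‖ (‖m‖ - μ_k ‖s_k‖^p)` and so `‖m‖ ≤ ‖F_k‖ - μ_k ‖s_k‖^p`; the same condition bounds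
`‖J_kᵀ m‖` by `(3λ_k/2)‖s_k‖^{p-1}`. Since the Jacobian is `L`-Lipschitz, `F_{k+1}` is within
`(L/2)‖s_k‖²` of `m`, and the gradient at `x_{k+1}` splits as
`J_{k+1}ᵀ (F_{k+1} - m) + (J_{k+1} - J_k)ᵀ m + J_kᵀ m`.
-/

open ContinuousLinearMap

open scoped RealInnerProductSpace

theorem le_sub_of_sq_le_mul_sub {a b c : ℝ} (hb : 0 < b) (h : a ^ 2 ≤ b * (a - c)) :
    a ≤ b - c := by
  -- `h` gives `b (b - a - c) ≥ (b - a)²`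
  nlinarith [sq_nonneg (b - a)]

theorem norm_sub_sub_fderiv_apply_le_of_lipschitz
    {E V : Type*} [NormedAddCommGroup E] [NormedSpace ℝ E]
    [NormedAddCommGroup V] [NormedSpace ℝ V]
    {F : E → V} {J : E → E →L[ℝ] V} {L : ℝ}
    (hF : ∀ y, HasFDerivAt F (J y) y) (hJ : ∀ y z, ‖J y - J z‖ ≤ L * ‖y - z‖) (x u : E) :
    ‖F (x + u) - F x - J x u‖ ≤ L / 2 * ‖u‖ ^ 2 := by
  set f : ℝ → V := fun t => F (x + t • u) - F x - t • J x u
  have hf (t : ℝ) : HasDerivAt f (J (x + t • u) u - J x u) t := by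
    have hline : HasDerivAt (fun t : ℝ => x + t • u) u t := by
      simpa using ((hasDerivAt_id t).smul_const u).const_add x
    exact ((((hF _).comp_hasDerivAt t hline).sub_const (F x)).sub
      ((hasDerivAt_id t).smul_const (J x u))).congr_deriv (by simp)
  have hB (t : ℝ) : HasDerivAt (fun t => L / 2 * ‖u‖ ^ 2 * t ^ 2) (L * ‖u‖ ^ 2 * t) t :=
    ((hasDerivAt_pow 2 t).const_mul _).congr_deriv (by push_cast; ring)
  have bound (t : ℝ) (ht : t ∈ Set.Ico (0 : ℝ) 1) :
      ‖J (x + t • u) u - J x u‖ ≤ L * ‖u‖ ^ 2 * t := by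
    calc ‖J (x + t • u) u - J x u‖ = ‖(J (x + t • u) - J x) u‖ := rfl
      _ ≤ ‖J (x + t • u) - J x‖ * ‖u‖ := le_opNorm _ _
      _ ≤ L * ‖t • u‖ * ‖u‖ := by gcongr; simpa using hJ (x + t • u) x
      _ = L * ‖u‖ ^ 2 * t := by rw [norm_smul, Real.norm_of_nonneg ht.1]; ring
  simpa [f] using image_norm_le_of_norm_deriv_right_le_deriv_boundary
    (fun t _ => (hf t).continuousAt.continuousWithinAt) (fun t _ => (hf t).hasDerivWithinAt)
    (by simp [f]) hB bound (Set.right_mem_Icc.2 zero_le_one)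

section LinearizedResidual

variable {E V : Type*} [NormedAddCommGroup E] [InnerProductSpace ℝ E] [CompleteSpace E]
  [NormedAddCommGroup V] [InnerProductSpace ℝ V] [CompleteSpace V]

theorem norm_adjoint_apply_le (A B : E →L[ℝ] V) (v w : V) :
    ‖adjoint A v‖ ≤ ‖A‖ * ‖v - w‖ + ‖A - B‖ * ‖w‖ + ‖adjoint B w‖ := by
  have hsplit : adjoint A v = adjoint A (v - w) + adjoint (A - B) w + adjoint B w := by
    simp only [map_sub, sub_apply]
    abel
  calc ‖adjoint A v‖ ≤ ‖adjoint A (v - w)‖ + ‖adjoint (A - B) w‖ + ‖adjoint B w‖ :=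
        hsplit ▸ norm_add₃_le
    _ ≤ ‖adjoint A‖ * ‖v - w‖ + ‖adjoint (A - B)‖ * ‖w‖ + ‖adjoint B w‖ := by
        gcongr <;> exact le_opNorm _ _
    _ = ‖A‖ * ‖v - w‖ + ‖A - B‖ * ‖w‖ + ‖adjoint B w‖ := by
        simp only [LinearIsometryEquiv.norm_map]

variable {A : E →L[ℝ] V} {b : V} {lam p : ℝ} {u : E}

theorem inner_linearized_residual_le (hp : p ≠ 0)
    (hstep : ‖adjoint A (b + A u) + (lam * ‖u‖ ^ (p - 2)) • u‖ ≤ lam / 2 * ‖u‖ ^ (p - 1)) :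
    ⟪b + A u, A u⟫ ≤ -(lam / 2 * ‖u‖ ^ p) := by
  set e := adjoint A (b + A u) + (lam * ‖u‖ ^ (p - 2)) • u
  have hpow_one : ‖u‖ ^ (p - 1) * ‖u‖ = ‖u‖ ^ p := by
    rw [← Real.rpow_add_one' (norm_nonneg u) (by simpa), sub_add_cancel]
  have hpow_two : ‖u‖ ^ (p - 2) * ‖u‖ ^ 2 = ‖u‖ ^ p := by
    rw [← Real.rpow_add_natCast' (norm_nonneg u) (by simpa), Nat.cast_ofNat, sub_add_cancel]
  calc ⟪b + A u, A u⟫ = ⟪adjoint A (b + A u), u⟫ := (adjoint_inner_left _ _ _).symm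
    _ = ⟪e, u⟫ - lam * ‖u‖ ^ p := by
        rw [inner_add_left, real_inner_smul_left, real_inner_self_eq_norm_sq, mul_assoc, hpow_two]
        ring
    _ ≤ ‖e‖ * ‖u‖ - lam * ‖u‖ ^ p := by gcongr; exact real_inner_le_norm e u
    _ ≤ lam / 2 * ‖u‖ ^ (p - 1) * ‖u‖ - lam * ‖u‖ ^ p := by gcongr
    _ = -(lam / 2 * ‖u‖ ^ p) := by rw [mul_assoc, hpow_one]; ring

theorem norm_linearized_residual_le (hp : p ≠ 0) (hb : 0 < ‖b‖) {μ : ℝ}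
    (hstep : ‖adjoint A (b + A u) + (2 * μ * ‖b‖ * ‖u‖ ^ (p - 2)) • u‖ ≤
      2 * μ * ‖b‖ / 2 * ‖u‖ ^ (p - 1)) :
    ‖b + A u‖ ≤ ‖b‖ - μ * ‖u‖ ^ p := by
  refine le_sub_of_sq_le_mul_sub hb ?_
  have hdescent := inner_linearized_residual_le hp hstep
  calc ‖b + A u‖ ^ 2 = ⟪b, b + A u⟫ + ⟪b + A u, A u⟫ := by
        rw [← real_inner_self_eq_norm_sq, inner_add_left, real_inner_comm (A u)]
    _ ≤ ‖b‖ * ‖b + A u‖ - 2 * μ * ‖b‖ / 2 * ‖u‖ ^ p := by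
        linarith [real_inner_le_norm b (b + A u)]
    _ = ‖b‖ * (‖b + A u‖ - μ * ‖u‖ ^ p) := by ring

theorem norm_adjoint_linearized_residual_le (hp : p ≠ 1) (hlam : 0 ≤ lam)
    (hstep : ‖adjoint A (b + A u) + (lam * ‖u‖ ^ (p - 2)) • u‖ ≤ lam / 2 * ‖u‖ ^ (p - 1)) :
    ‖adjoint A (b + A u)‖ ≤ 3 * lam / 2 * ‖u‖ ^ (p - 1) := by
  have hreg : ‖(lam * ‖u‖ ^ (p - 2)) • u‖ = lam * ‖u‖ ^ (p - 1) := by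
    rw [norm_smul, Real.norm_of_nonneg (by positivity), mul_assoc,
      ← Real.rpow_add_one' (norm_nonneg u) (by contrapose! hp; linarith)]
    ring_nf
  calc ‖adjoint A (b + A u)‖
      ≤ ‖adjoint A (b + A u) + (lam * ‖u‖ ^ (p - 2)) • u‖ + ‖(lam * ‖u‖ ^ (p - 2)) • u‖ :=
        norm_le_add_norm_add _ _
    _ ≤ 3 * lam / 2 * ‖u‖ ^ (p - 1) := by linarith

end LinearizedResidual

theorem gn_step_bounds_general
    {E V : Type*} [NormedAddCommGroup E] [InnerProductSpace ℝ E] [CompleteSpace E]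
    [NormedAddCommGroup V] [InnerProductSpace ℝ V] [CompleteSpace V]
    (F : E → V) (J : E → E →L[ℝ] V)
    (hF : ∀ y, HasFDerivAt F (J y) y)
    (L σ : ℝ)
    (hlip : ∀ y z, ‖J y - J z‖ ≤ L * ‖y - z‖)
    (hJbdd : ∀ y, ‖J y‖ ≤ σ)
    (p : ℝ) (hp : 2 < p)
    (mu : ℕ → ℝ) (hmu : ∀ k, 0 < mu k)
    (x s : ℕ → E)
    (hx : ∀ k, x (k + 1) = x k + s k)
    (hFpos : ∀ k, 0 < ‖F (x k)‖)
    (lam : ℕ → ℝ) (hlamdef : ∀ k, lam k = 2 * mu k * ‖F (x k)‖)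
    (hopt : ∀ k,
      ‖ContinuousLinearMap.adjoint (J (x k)) (F (x k) + J (x k) (s k)) +
          (lam k * ‖s k‖ ^ (p - 2)) • s k‖ ≤ lam k / 2 * ‖s k‖ ^ (p - 1))
    (i : ℕ) :
    ‖F (x (i + 1))‖ - ‖F (x i)‖ ≤ L / 2 * ‖s i‖ ^ 2 - mu i * ‖s i‖ ^ p ∧
      ‖ContinuousLinearMap.adjoint (J (x (i + 1))) (F (x (i + 1)))‖ ≤
        ‖F (x i)‖ * (L * ‖s i‖ + 3 * mu i * ‖s i‖ ^ (p - 1)) + L * σ / 2 * ‖s i‖ ^ 2 := by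
  have hμ := hmu i
  have hFy := hFpos i
  set y := x i
  set u := s i
  set m := F y + J y u
  have htaylor : ‖F (y + u) - m‖ ≤ L / 2 * ‖u‖ ^ 2 := by
    simpa only [m, sub_sub] using norm_sub_sub_fderiv_apply_le_of_lipschitz hF hlip y u
  have hres : ‖m‖ ≤ ‖F y‖ - mu i * ‖u‖ ^ p :=
    norm_linearized_residual_le (by linarith) hFy (hlamdef i ▸ hopt i)
  have hadj : ‖adjoint (J y) m‖ ≤ 3 * lam i / 2 * ‖u‖ ^ (p - 1) :=
    norm_adjoint_linearized_residual_le (by linarith) (by rw [hlamdef]; positivity) (hopt i)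
  have hJdiff : ‖J (y + u) - J y‖ ≤ L * ‖u‖ := by simpa using hlip (y + u) y
  have hm_le : ‖m‖ ≤ ‖F y‖ := hres.trans (sub_le_self _ (by positivity))
  rw [hx i]
  constructor
  · linarith [norm_le_norm_add_norm_sub' (F (y + u)) m]
  · calc ‖adjoint (J (y + u)) (F (y + u))‖
        ≤ ‖J (y + u)‖ * ‖F (y + u) - m‖ + ‖J (y + u) - J y‖ * ‖m‖ + ‖adjoint (J y) m‖ :=
          norm_adjoint_apply_le _ _ _ _
      _ ≤ σ * (L / 2 * ‖u‖ ^ 2) + L * ‖u‖ * ‖F y‖ + 3 * lam i / 2 * ‖u‖ ^ (p - 1) := by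
          refine add_le_add (add_le_add ?_ ?_) hadj
          · exact mul_le_mul (hJbdd _) htaylor (norm_nonneg _) ((norm_nonneg _).trans (hJbdd y))
          · exact mul_le_mul hJdiff hm_le (norm_nonneg _) ((norm_nonneg _).trans hJdiff)
      _ = ‖F y‖ * (L * ‖u‖ + 3 * mu i * ‖u‖ ^ (p - 1)) + L * σ / 2 * ‖u‖ ^ 2 := by
          rw [hlamdef]; ring

/-- One-step bounds for the higher-order regularized Gauss–Newton method:
`‖F_{i+1}‖ - ‖F_i‖ ≤ (L/2)‖s_i‖² - μ_i‖s_i‖^p` and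
`‖∇f(x_{i+1})‖ ≤ ‖F_i‖ (L‖s_i‖ + 3μ_i‖s_i‖^{p-1}) + (Lσ/2)‖s_i‖²`,
where `f(x) = ½‖F(x)‖²` so that `∇f(x) = J(x)ᵀ F(x)`. -/
theorem gn_step_bounds
    {E V : Type*} [NormedAddCommGroup E] [InnerProductSpace ℝ E] [CompleteSpace E]
    [NormedAddCommGroup V] [InnerProductSpace ℝ V] [CompleteSpace V]
    (F : E → V) (J : E → E →L[ℝ] V)
    (hF : ∀ y, HasFDerivAt F (J y) y)
    (L σ : ℝ) (hL : 0 < L) (hσ : 0 < σ)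
    (hlip : ∀ y z, ‖J y - J z‖ ≤ L * ‖y - z‖)
    (hJbdd : ∀ y, ‖J y‖ ≤ σ)
    (p : ℝ) (hp : 2 < p)
    (mu : ℕ → ℝ) (hmu : ∀ k, 0 < mu k)
    (x s : ℕ → E)
    (hx : ∀ k, x (k + 1) = x k + s k)
    (hFpos : ∀ k, 0 < ‖F (x k)‖)
    (lam : ℕ → ℝ) (hlamdef : ∀ k, lam k = 2 * mu k * ‖F (x k)‖)
    (hopt : ∀ k,
      ‖ContinuousLinearMap.adjoint (J (x k)) (F (x k) + J (x k) (s k)) +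
          (lam k * ‖s k‖ ^ (p - 2)) • s k‖ ≤ lam k / 2 * ‖s k‖ ^ (p - 1))
    (i : ℕ) :
    ‖F (x (i + 1))‖ - ‖F (x i)‖ ≤ L / 2 * ‖s i‖ ^ 2 - mu i * ‖s i‖ ^ p ∧
      ‖ContinuousLinearMap.adjoint (J (x (i + 1))) (F (x (i + 1)))‖ ≤
        ‖F (x i)‖ * (L * ‖s i‖ + 3 * mu i * ‖s i‖ ^ (p - 1)) + L * σ / 2 * ‖s i‖ ^ 2 :=
  gn_step_bounds_general F J hF L σ hlip hJbdd p hp mu hmu x s hx hFpos lam hlamdef hopt i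
end

section
/- For every k ≥ 1, defining A_k := 2‖F_0‖ + L ∑_{i=0}^{k−1} (L/μ_i)^{2/(p−2)}, one has min_{1 ≤ i ≤ k} ‖∇f(x_i)‖ ≤ (2 A_k^{2−1/p}/k) · (∑_{i=0}^{k−1} μ_i)^{1/p} + σ A_k/(2k), for any choice of positive parameters μ_0, …, μ_{k−1}, where f(x) = ½‖F(x)‖². -/
/-!
Write `uᵢ = ‖sᵢ‖` and `τᵢ = (L/μᵢ)^{1/(p-2)}`, so that `L = μᵢ τᵢ^{p-2}` and
`A_k = 2‖F₀‖ + ∑ μᵢ τᵢ^p`.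

Testing the optimality condition of the step against `sᵢ` gives
`‖Fᵢ + Jᵢ sᵢ‖ ≤ ‖Fᵢ‖ - μᵢ uᵢ^p`. With the Taylor bound `‖F(x + s) - F x - J x s‖ ≤ L/2 ‖s‖²`
and Young's inequality `τ^{p-2} u² ≤ u^p + τ^p` this is the descent
`2‖Fᵢ₊₁‖ + μᵢ uᵢ^p ≤ 2‖Fᵢ‖ + μᵢ τᵢ^p`, which telescopes to `2‖Fᵢ‖ ≤ A_k` and
`∑ μᵢ uᵢ^p ≤ A_k`.

Splitting `Jᵢ₊₁ᵀ Fᵢ₊₁` into the change of Jacobian, the Taylor remainder and the residual of the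
optimality condition bounds it by `μᵢ`-weighted monomials in `uᵢ, τᵢ` of degree at most `p`.
Hölder's inequality with weights `μᵢ` bounds their sums by powers of `A_k` and `∑ μᵢ`, and the
minimum is at most the average.
-/

open ContinuousLinearMap Finset
open scoped RealInnerProductSpace

theorem Real.rpow_mul_rpow_le_add {f g α β : ℝ} (hf : 0 ≤ f) (hg : 0 ≤ g) (hα : 0 ≤ α)
    (hβ : 0 ≤ β) (hαβ : 0 < α + β) :
    f ^ α * g ^ β ≤ α / (α + β) * f ^ (α + β) + β / (α + β) * g ^ (α + β) := by
  have hf' : (f ^ (α + β)) ^ (α / (α + β)) = f ^ α := by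
    rw [← Real.rpow_mul hf, mul_div_cancel₀ _ hαβ.ne']
  have hg' : (g ^ (α + β)) ^ (β / (α + β)) = g ^ β := by
    rw [← Real.rpow_mul hg, mul_div_cancel₀ _ hαβ.ne']
  rw [← hf', ← hg']
  exact Real.geom_mean_le_arith_mean2_weighted (by positivity) (by positivity)
    (by positivity) (by positivity) (by field_simp)

theorem Real.rpow_sub_two_mul_sq_le_add {u τ p : ℝ} (hu : 0 ≤ u) (hτ : 0 ≤ τ) (hp : 2 ≤ p) :
    τ ^ (p - 2) * u ^ 2 ≤ u ^ p + τ ^ p := by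
  have := Real.rpow_mul_rpow_le_add hu hτ zero_le_two (by linarith : (0:ℝ) ≤ p - 2) (by linarith)
  rw [show (2:ℝ) + (p - 2) = p by ring, Real.rpow_two] at this
  have h2 : 2 / p ≤ 1 := (div_le_one (by linarith)).2 (by linarith)
  have h3 : (p - 2) / p ≤ 1 := (div_le_one (by linarith)).2 (by linarith)
  have hup := Real.rpow_nonneg hu p
  have hτp := Real.rpow_nonneg hτ p
  nlinarith

theorem mul_rpow_one_div_sub_two_rpow_sub_two {L μ p : ℝ} (hL : 0 ≤ L) (hμ : 0 < μ)
    (hp : 2 < p) : μ * ((L / μ) ^ (1 / (p - 2))) ^ (p - 2) = L := by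
  rw [← Real.rpow_mul (by positivity), one_div_mul_cancel (by linarith), Real.rpow_one]
  field_simp

theorem mul_rpow_one_div_sub_two_rpow {L μ p : ℝ} (hL : 0 ≤ L) (hμ : 0 < μ) (hp : 2 < p) :
    μ * ((L / μ) ^ (1 / (p - 2))) ^ p = L * (L / μ) ^ (2 / (p - 2)) := by
  have hLμ : 0 ≤ L / μ := by positivity
  have hsplit : ((L / μ) ^ (1 / (p - 2))) ^ p =
      ((L / μ) ^ (1 / (p - 2))) ^ (p - 2) * ((L / μ) ^ (1 / (p - 2))) ^ (2 : ℝ) := by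
    rw [← Real.rpow_add' (by positivity) (by linarith), sub_add_cancel]
  rw [hsplit, ← mul_assoc, mul_rpow_one_div_sub_two_rpow_sub_two hL hμ hp, ← Real.rpow_mul hLμ]
  ring_nf

section WeightedHolder

variable {ι : Type*} (s : Finset ι) {w f g : ι → ℝ}

theorem sum_mul_rpow_le_of_sum_mul_rpow_le (hw : ∀ i, 0 ≤ w i) (hf : ∀ i, 0 ≤ f i)
    {r p A : ℝ} (hr : 0 < r) (hrp : r ≤ p) (hA : ∑ i ∈ s, w i * f i ^ p ≤ A) :
    ∑ i ∈ s, w i * f i ^ r ≤ (∑ i ∈ s, w i) ^ (1 - r / p) * A ^ (r / p) := by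
  have hp : 0 < p := hr.trans_le hrp
  have hpow : ∀ i, (f i ^ r) ^ (p / r) = f i ^ p := fun i => by
    rw [← Real.rpow_mul (hf i), mul_div_cancel₀ _ hr.ne']
  have := Real.inner_le_weight_mul_Lp_of_nonneg s ((one_le_div hr).2 hrp) w (fun i => f i ^ r) hw
    fun i => Real.rpow_nonneg (hf i) r
  simp only [hpow, inv_div] at this
  refine this.trans ?_
  gcongr
  · exact Real.rpow_nonneg (sum_nonneg fun i _ => hw i) _
  · exact sum_nonneg fun i _ => mul_nonneg (hw i) (Real.rpow_nonneg (hf i) p)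

theorem sum_mul_rpow_mul_rpow_le (hw : ∀ i, 0 ≤ w i) (hf : ∀ i, 0 ≤ f i) (hg : ∀ i, 0 ≤ g i)
    {α β r p A : ℝ} (hα : 0 ≤ α) (hβ : 0 ≤ β) (hαβ : α + β = r) (hr : 0 < r) (hrp : r ≤ p)
    (hfA : ∑ i ∈ s, w i * f i ^ p ≤ A) (hgA : ∑ i ∈ s, w i * g i ^ p ≤ A) :
    ∑ i ∈ s, w i * (f i ^ α * g i ^ β) ≤ (∑ i ∈ s, w i) ^ (1 - r / p) * A ^ (r / p) := by
  subst hαβ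
  set B := (∑ i ∈ s, w i) ^ (1 - (α + β) / p) * A ^ ((α + β) / p)
  calc ∑ i ∈ s, w i * (f i ^ α * g i ^ β)
      ≤ ∑ i ∈ s, w i * (α / (α + β) * f i ^ (α + β) + β / (α + β) * g i ^ (α + β)) :=
        sum_le_sum fun i _ => mul_le_mul_of_nonneg_left
          (Real.rpow_mul_rpow_le_add (hf i) (hg i) hα hβ hr) (hw i)
    _ = α / (α + β) * ∑ i ∈ s, w i * f i ^ (α + β) +
          β / (α + β) * ∑ i ∈ s, w i * g i ^ (α + β) := by
        simp only [mul_sum, ← sum_add_distrib]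
        exact sum_congr rfl fun i _ => by ring
    _ ≤ α / (α + β) * B + β / (α + β) * B := by
        gcongr
        · exact sum_mul_rpow_le_of_sum_mul_rpow_le s hw hf hr hrp hfA
        · exact sum_mul_rpow_le_of_sum_mul_rpow_le s hw hg hr hrp hgA
    _ = B := by field_simp

theorem sum_gradient_estimates_le {μ u τ : ι → ℝ} (hμ : ∀ i, 0 ≤ μ i) (hu : ∀ i, 0 ≤ u i)
    (hτ : ∀ i, 0 ≤ τ i) {p A σ : ℝ} (hp : 2 ≤ p) (hσ : 0 ≤ σ)
    (huA : ∑ i ∈ s, μ i * u i ^ p ≤ A) (hτA : ∑ i ∈ s, μ i * τ i ^ p ≤ A) :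
    ∑ i ∈ s, (A / 2 * (μ i * (u i * τ i ^ (p - 2))) + σ / 2 * (μ i * (u i ^ 2 * τ i ^ (p - 2)))
        + 3 * A / 2 * (μ i * u i ^ (p - 1))) ≤
      2 * A ^ (2 - 1 / p) * (∑ i ∈ s, μ i) ^ (1 / p) + σ * A / 2 := by
  have hA : 0 ≤ A :=
    (sum_nonneg fun i _ => mul_nonneg (hμ i) (Real.rpow_nonneg (hu i) p)).trans huA
  have hM : (∑ i ∈ s, μ i) ^ (1 - (p - 1) / p) = (∑ i ∈ s, μ i) ^ (1 / p) := by
    congr 1; field_simp; ring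
  have hAA : A * A ^ ((p - 1) / p) = A ^ (2 - 1 / p) := by
    have hp' : (0:ℝ) < (p - 1) / p := div_pos (by linarith) (by linarith)
    rw [← Real.rpow_one_add' hA (by linarith)]; congr 1; field_simp; ring
  have h1 : ∑ i ∈ s, μ i * (u i * τ i ^ (p - 2)) ≤
      (∑ i ∈ s, μ i) ^ (1 / p) * A ^ ((p - 1) / p) := by
    have := sum_mul_rpow_mul_rpow_le s hμ hu hτ (β := p - 2) (r := p - 1) zero_le_one
      (by linarith) (by ring) (by linarith) (by linarith) huA hτA
    simpa only [Real.rpow_one, hM] using this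
  have h2 : ∑ i ∈ s, μ i * (u i ^ 2 * τ i ^ (p - 2)) ≤ A := by
    have := sum_mul_rpow_mul_rpow_le s hμ hu hτ (β := p - 2) zero_le_two (by linarith)
      (by ring) (by linarith) le_rfl huA hτA
    simpa [div_self (by linarith : p ≠ 0)] using this
  have h3 : ∑ i ∈ s, μ i * u i ^ (p - 1) ≤ (∑ i ∈ s, μ i) ^ (1 / p) * A ^ ((p - 1) / p) := by
    rw [← hM]
    exact sum_mul_rpow_le_of_sum_mul_rpow_le s hμ hu (by linarith) (by linarith) huA
  rw [sum_add_distrib, sum_add_distrib, ← mul_sum, ← mul_sum, ← mul_sum]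
  calc A / 2 * ∑ i ∈ s, μ i * (u i * τ i ^ (p - 2))
        + σ / 2 * ∑ i ∈ s, μ i * (u i ^ 2 * τ i ^ (p - 2))
        + 3 * A / 2 * ∑ i ∈ s, μ i * u i ^ (p - 1)
      ≤ A / 2 * ((∑ i ∈ s, μ i) ^ (1 / p) * A ^ ((p - 1) / p)) + σ / 2 * A
        + 3 * A / 2 * ((∑ i ∈ s, μ i) ^ (1 / p) * A ^ ((p - 1) / p)) := by gcongr
    _ = 2 * A ^ (2 - 1 / p) * (∑ i ∈ s, μ i) ^ (1 / p) + σ * A / 2 := by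
        rw [← hAA]; ring

end WeightedHolder

theorem add_sum_range_le_of_succ_add_le {a b c : ℕ → ℝ} (hc : ∀ i, 0 ≤ c i)
    (h : ∀ i, a (i + 1) + b i ≤ a i + c i) {n k : ℕ} (hn : n ≤ k) :
    a n + ∑ i ∈ range n, b i ≤ a 0 + ∑ i ∈ range k, c i := by
  have htel : ∀ m, a m + ∑ i ∈ range m, b i ≤ a 0 + ∑ i ∈ range m, c i := by
    intro m
    induction m with
    | zero => simp
    | succ m ih =>
      rw [sum_range_succ, sum_range_succ]
      linarith [h m]
  exact (htel n).trans (add_le_add_right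
    (sum_le_sum_of_subset_of_nonneg (range_subset_range.2 hn) fun i _ _ => hc i) _)

theorem inf'_Icc_le_sum_range_div {f : ℕ → ℝ} {k : ℕ} (hk : 1 ≤ k) :
    (Icc 1 k).inf' (nonempty_Icc.mpr hk) f ≤ (∑ i ∈ range k, f (i + 1)) / k := by
  rw [le_div_iff₀ (by positivity)]
  have := card_nsmul_le_sum (range k) (fun i => f (i + 1))
    ((Icc 1 k).inf' (nonempty_Icc.mpr hk) f)
    fun i hi => inf'_le f (mem_Icc.2 ⟨by omega, by simp at hi; omega⟩)
  simpa [mul_comm] using this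

theorem norm_sub_sub_apply_le_of_lipschitz {E V : Type*} [NormedAddCommGroup E]
    [NormedSpace ℝ E] [NormedAddCommGroup V] [NormedSpace ℝ V] {F : E → V}
    {J : E → E →L[ℝ] V} {L : ℝ} (hF : ∀ y, HasFDerivAt F (J y) y)
    (hJ : ∀ y z, ‖J y - J z‖ ≤ L * ‖y - z‖) (x s : E) :
    ‖F (x + s) - F x - J x s‖ ≤ L / 2 * ‖s‖ ^ 2 := by
  set g : ℝ → V := fun t => F (x + t • s) - F x - t • J x s
  have hg : ∀ t, HasDerivAt g ((J (x + t • s) - J x) s) t := fun t => by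
    have hline : HasDerivAt (fun t : ℝ => x + t • s) s t := by
      simpa using ((hasDerivAt_id t).smul_const s).const_add x
    exact (((hF _).comp_hasDerivAt t hline).sub_const (F x)).sub
      (((hasDerivAt_id' t).smul_const (J x s)).congr_deriv (one_smul _ _))
  have hB : ∀ t, HasDerivAt (fun t => L / 2 * ‖s‖ ^ 2 * t ^ 2) (L * ‖s‖ ^ 2 * t) t := fun t =>
    ((hasDerivAt_pow 2 t).const_mul _).congr_deriv (by push_cast; ring)
  have hbound : ∀ t ∈ Set.Ico (0 : ℝ) 1, ‖(J (x + t • s) - J x) s‖ ≤ L * ‖s‖ ^ 2 * t := by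
    rintro t ⟨ht, -⟩
    calc ‖(J (x + t • s) - J x) s‖ ≤ L * ‖(x + t • s) - x‖ * ‖s‖ :=
          (le_opNorm _ _).trans (mul_le_mul_of_nonneg_right (hJ _ _) (norm_nonneg _))
      _ = L * ‖s‖ ^ 2 * t := by
          rw [add_sub_cancel_left, norm_smul, Real.norm_of_nonneg ht]; ring
  simpa [g] using image_norm_le_of_norm_deriv_right_le_deriv_boundary
    (fun t _ => (hg t).continuousAt.continuousWithinAt) (fun t _ => (hg t).hasDerivWithinAt)
    (by simp [g]) hB hbound (Set.right_mem_Icc.2 zero_le_one)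

section RegularizedStep

variable {E V : Type*} [NormedAddCommGroup E] [InnerProductSpace ℝ E] [CompleteSpace E]
  [NormedAddCommGroup V] [InnerProductSpace ℝ V] [CompleteSpace V]
  {J : E →L[ℝ] V} {r : V} {s : E} {lam p : ℝ}

theorem norm_add_apply_sq_le (hp : p ≠ 0)
    (h : ‖adjoint J (r + J s) + (lam * ‖s‖ ^ (p - 2)) • s‖ ≤ lam / 2 * ‖s‖ ^ (p - 1)) :
    ‖r + J s‖ ^ 2 ≤ ‖r‖ ^ 2 - lam * ‖s‖ ^ p := by
  have hs := norm_nonneg s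
  have hpow1 : ‖s‖ ^ (p - 1) * ‖s‖ = ‖s‖ ^ p := by
    rw [← Real.rpow_add_one' hs (by simpa using hp), sub_add_cancel]
  have hpow2 : ‖s‖ ^ (p - 2) * ‖s‖ ^ 2 = ‖s‖ ^ p := by
    rw [← Real.rpow_natCast, ← Real.rpow_add' hs (by simpa using hp)]; norm_num
  have hinner : ⟪adjoint J (r + J s) + (lam * ‖s‖ ^ (p - 2)) • s, s⟫ =
      ⟪r + J s, J s⟫ + lam * ‖s‖ ^ p := by
    rw [inner_add_left, real_inner_smul_left, adjoint_inner_left, real_inner_self_eq_norm_sq,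
      mul_assoc, hpow2]
  have hcs := (real_inner_le_norm _ s).trans (mul_le_mul_of_nonneg_right h hs)
  rw [hinner, mul_assoc, hpow1] at hcs
  have hexp : ‖r‖ ^ 2 = ‖r + J s‖ ^ 2 - 2 * ⟪r + J s, J s⟫ + ‖J s‖ ^ 2 := by
    simpa using norm_sub_sq_real (r + J s) (J s)
  nlinarith [sq_nonneg ‖J s‖]

theorem norm_add_apply_le {μ : ℝ} (hr : 0 < ‖r‖) (hp : p ≠ 0) (hlam : lam = 2 * μ * ‖r‖)
    (h : ‖adjoint J (r + J s) + (lam * ‖s‖ ^ (p - 2)) • s‖ ≤ lam / 2 * ‖s‖ ^ (p - 1)) :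
    ‖r + J s‖ ≤ ‖r‖ - μ * ‖s‖ ^ p := by
  have hsq := norm_add_apply_sq_le hp h
  rw [hlam] at hsq
  have hhalf : μ * ‖s‖ ^ p ≤ ‖r‖ / 2 := by
    nlinarith [sq_nonneg ‖r + J s‖]
  apply le_of_pow_le_pow_left₀ two_ne_zero (by linarith)
  nlinarith [sq_nonneg (μ * ‖s‖ ^ p)]

theorem norm_adjoint_add_apply_le (hp : p ≠ 1) (hlam : 0 ≤ lam)
    (h : ‖adjoint J (r + J s) + (lam * ‖s‖ ^ (p - 2)) • s‖ ≤ lam / 2 * ‖s‖ ^ (p - 1)) :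
    ‖adjoint J (r + J s)‖ ≤ 3 / 2 * (lam * ‖s‖ ^ (p - 1)) := by
  have hs := norm_nonneg s
  have hreg : ‖(lam * ‖s‖ ^ (p - 2)) • s‖ = lam * ‖s‖ ^ (p - 1) := by
    rw [norm_smul, Real.norm_of_nonneg (by positivity), mul_assoc,
      ← Real.rpow_add_one' hs (by contrapose! hp; linarith)]
    ring_nf
  calc ‖adjoint J (r + J s)‖
      = ‖(adjoint J (r + J s) + (lam * ‖s‖ ^ (p - 2)) • s) - (lam * ‖s‖ ^ (p - 2)) • s‖ := by
        rw [add_sub_cancel_right]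
    _ ≤ lam / 2 * ‖s‖ ^ (p - 1) + lam * ‖s‖ ^ (p - 1) :=
        (norm_sub_le _ _).trans (by rw [hreg]; gcongr)
    _ = 3 / 2 * (lam * ‖s‖ ^ (p - 1)) := by ring

end RegularizedStep

section RegularizedIteration

variable {E V : Type*} [NormedAddCommGroup E] [InnerProductSpace ℝ E] [CompleteSpace E]
  [NormedAddCommGroup V] [InnerProductSpace ℝ V] [CompleteSpace V]
  {F : E → V} {J : E → E →L[ℝ] V} {L p μ τ lam : ℝ} {x s : E}

theorem two_mul_norm_apply_add_add_le (hF : ∀ y, HasFDerivAt F (J y) y)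
    (hJ : ∀ y z, ‖J y - J z‖ ≤ L * ‖y - z‖) (hx : 0 < ‖F x‖) (hp : 2 ≤ p) (hμ : 0 ≤ μ)
    (hτ : 0 ≤ τ) (hτL : μ * τ ^ (p - 2) = L) (hlam : lam = 2 * μ * ‖F x‖)
    (h : ‖adjoint (J x) (F x + J x s) + (lam * ‖s‖ ^ (p - 2)) • s‖ ≤ lam / 2 * ‖s‖ ^ (p - 1)) :
    2 * ‖F (x + s)‖ + μ * ‖s‖ ^ p ≤ 2 * ‖F x‖ + μ * τ ^ p := by
  have hstep : ‖F (x + s)‖ ≤ ‖F x‖ - μ * ‖s‖ ^ p + L / 2 * ‖s‖ ^ 2 :=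
    calc ‖F (x + s)‖ = ‖(F x + J x s) + (F (x + s) - F x - J x s)‖ := by abel_nf
      _ ≤ ‖F x + J x s‖ + ‖F (x + s) - F x - J x s‖ := norm_add_le _ _
      _ ≤ ‖F x‖ - μ * ‖s‖ ^ p + L / 2 * ‖s‖ ^ 2 :=
          add_le_add (norm_add_apply_le hx (by linarith) hlam h)
            (norm_sub_sub_apply_le_of_lipschitz hF hJ x s)
  have hyoung := Real.rpow_sub_two_mul_sq_le_add (norm_nonneg s) hτ hp
  rw [← hτL] at hstep
  nlinarith

theorem norm_adjoint_apply_add_le (hF : ∀ y, HasFDerivAt F (J y) y)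
    (hJ : ∀ y z, ‖J y - J z‖ ≤ L * ‖y - z‖) {σ A : ℝ} (hσ : ‖J x‖ ≤ σ) (hp : p ≠ 1)
    (hμ : 0 ≤ μ) (hτ : 0 ≤ τ) (hτL : μ * τ ^ (p - 2) = L) (hx : 2 * ‖F x‖ ≤ A)
    (hxs : 2 * ‖F (x + s)‖ ≤ A) (hlam : lam = 2 * μ * ‖F x‖)
    (h : ‖adjoint (J x) (F x + J x s) + (lam * ‖s‖ ^ (p - 2)) • s‖ ≤ lam / 2 * ‖s‖ ^ (p - 1)) :
    ‖adjoint (J (x + s)) (F (x + s))‖ ≤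
      A / 2 * (μ * (‖s‖ * τ ^ (p - 2))) + σ / 2 * (μ * (‖s‖ ^ 2 * τ ^ (p - 2)))
        + 3 * A / 2 * (μ * ‖s‖ ^ (p - 1)) := by
  have hsplit : adjoint (J (x + s)) (F (x + s)) = adjoint (J (x + s) - J x) (F (x + s)) +
      adjoint (J x) (F (x + s) - F x - J x s) + adjoint (J x) (F x + J x s) := by
    simp only [map_sub, map_add, sub_apply]
    abel
  have hjump : ‖adjoint (J (x + s) - J x) (F (x + s))‖ ≤ L * ‖s‖ * (A / 2) := by
    refine (le_opNorm _ _).trans (mul_le_mul ?_ (by linarith) (norm_nonneg _) ?_)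
    · rw [LinearIsometryEquiv.norm_map]
      simpa using hJ (x + s) x
    · rw [← hτL]; positivity
  have htaylor : ‖adjoint (J x) (F (x + s) - F x - J x s)‖ ≤ σ * (L / 2 * ‖s‖ ^ 2) := by
    refine (le_opNorm _ _).trans (mul_le_mul ?_ (norm_sub_sub_apply_le_of_lipschitz hF hJ x s)
      (norm_nonneg _) ((norm_nonneg _).trans hσ))
    simpa using hσ
  have hres := norm_adjoint_add_apply_le hp (by rw [hlam]; positivity) h
  have hlamA : lam * ‖s‖ ^ (p - 1) ≤ 2 * μ * (A / 2) * ‖s‖ ^ (p - 1) := by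
    rw [hlam]; gcongr; linarith
  rw [hsplit]
  refine norm_add₃_le.trans ((add_le_add_three hjump htaylor hres).trans ?_)
  rw [← hτL]
  linarith

end RegularizedIteration

theorem gn_rate_general_general
    {E V : Type*} [NormedAddCommGroup E] [InnerProductSpace ℝ E] [CompleteSpace E]
    [NormedAddCommGroup V] [InnerProductSpace ℝ V] [CompleteSpace V]
    (F : E → V) (J : E → E →L[ℝ] V)
    (hF : ∀ y, HasFDerivAt F (J y) y)
    (L σ : ℝ) (hL : 0 < L)
    (hlip : ∀ y z, ‖J y - J z‖ ≤ L * ‖y - z‖)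
    (hJbdd : ∀ y, ‖J y‖ ≤ σ)
    (p : ℝ) (hp : 2 < p)
    (mu : ℕ → ℝ) (hmu : ∀ k, 0 < mu k)
    (x s : ℕ → E)
    (hx : ∀ k, x (k + 1) = x k + s k)
    (hFpos : ∀ k, 0 < ‖F (x k)‖)
    (lam : ℕ → ℝ) (hlamdef : ∀ k, lam k = 2 * mu k * ‖F (x k)‖)
    (hopt : ∀ k,
      ‖ContinuousLinearMap.adjoint (J (x k)) (F (x k) + J (x k) (s k)) +
          (lam k * ‖s k‖ ^ (p - 2)) • s k‖ ≤ lam k / 2 * ‖s k‖ ^ (p - 1))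
    (k : ℕ) (hk : 1 ≤ k)
    (A : ℝ) (hA : A = 2 * ‖F (x 0)‖ + L * ∑ i ∈ Finset.range k, (L / mu i) ^ (2 / (p - 2))) :
    (Finset.Icc 1 k).inf' (Finset.nonempty_Icc.mpr hk)
        (fun i => ‖ContinuousLinearMap.adjoint (J (x i)) (F (x i))‖) ≤
      2 * A ^ (2 - 1 / p) / (k : ℝ) * (∑ i ∈ Finset.range k, mu i) ^ ((1 : ℝ) / p) +
        σ * A / (2 * (k : ℝ)) := by
  set τ : ℕ → ℝ := fun i => (L / mu i) ^ (1 / (p - 2)) with hτdef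
  have hτ : ∀ i, 0 ≤ τ i := fun i => Real.rpow_nonneg (div_pos hL (hmu i)).le _
  have hτL : ∀ i, mu i * τ i ^ (p - 2) = L := fun i =>
    mul_rpow_one_div_sub_two_rpow_sub_two hL.le (hmu i) hp
  have hAτ : A = 2 * ‖F (x 0)‖ + ∑ i ∈ range k, mu i * τ i ^ p := by
    simp only [hτdef, mul_rpow_one_div_sub_two_rpow hL.le (hmu _) hp, ← mul_sum, hA]
  have hdescent : ∀ n ≤ k, 2 * ‖F (x n)‖ + ∑ i ∈ range n, mu i * ‖s i‖ ^ p ≤ A := fun n hn =>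
    hAτ ▸ add_sum_range_le_of_succ_add_le (a := fun i => 2 * ‖F (x i)‖)
      (fun i => by have := hmu i; positivity)
      (fun i => hx i ▸ two_mul_norm_apply_add_add_le hF hlip (hFpos i) hp.le (hmu i).le (hτ i)
        (hτL i) (hlamdef i) (hopt i)) hn
  have hFA : ∀ n ≤ k, 2 * ‖F (x n)‖ ≤ A := fun n hn =>
    (le_add_of_nonneg_right (sum_nonneg fun i _ => by have := hmu i; positivity)).trans
      (hdescent n hn)
  have hSA : ∑ i ∈ range k, mu i * ‖s i‖ ^ p ≤ A :=
    (le_add_of_nonneg_left (by positivity)).trans (hdescent k le_rfl)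
  have hτA : ∑ i ∈ range k, mu i * τ i ^ p ≤ A := hAτ ▸ le_add_of_nonneg_left (by positivity)
  calc _ ≤ (∑ i ∈ range k, ‖adjoint (J (x (i + 1))) (F (x (i + 1)))‖) / k :=
        inf'_Icc_le_sum_range_div hk
    _ ≤ (2 * A ^ (2 - 1 / p) * (∑ i ∈ range k, mu i) ^ (1 / p) + σ * A / 2) / k := by
        gcongr
        refine (sum_le_sum fun i hi => ?_).trans (sum_gradient_estimates_le _
          (fun i => (hmu i).le) (fun i => norm_nonneg _) hτ hp.le
          ((norm_nonneg _).trans (hJbdd (x 0))) hSA hτA)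
        have hi := mem_range.1 hi
        have hFA' := hFA (i + 1) hi
        rw [hx] at hFA' ⊢
        exact norm_adjoint_apply_add_le hF hlip (hJbdd _) (by linarith) (hmu i).le (hτ i)
          (hτL i) (hFA i hi.le) hFA' (hlamdef i) (hopt i)
    _ = _ := by ring

/-- General gradient-norm bound for the higher-order regularized Gauss–Newton method:
for all `k ≥ 1`, with `A_k := 2‖F_0‖ + L ∑_{i<k} (L/μ_i)^{2/(p-2)}`,
`min_{1 ≤ i ≤ k} ‖∇f(x_i)‖ ≤ (2 A_k^{2-1/p}/k) (∑_{i<k} μ_i)^{1/p} + σ A_k/(2k)`,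
where `f(x) = ½‖F(x)‖²` so that `∇f(x) = J(x)ᵀ F(x)`. -/
theorem gn_rate_general
    {E V : Type*} [NormedAddCommGroup E] [InnerProductSpace ℝ E] [CompleteSpace E]
    [NormedAddCommGroup V] [InnerProductSpace ℝ V] [CompleteSpace V]
    (F : E → V) (J : E → E →L[ℝ] V)
    (hF : ∀ y, HasFDerivAt F (J y) y)
    (L σ : ℝ) (hL : 0 < L) (hσ : 0 < σ)
    (hlip : ∀ y z, ‖J y - J z‖ ≤ L * ‖y - z‖)
    (hJbdd : ∀ y, ‖J y‖ ≤ σ)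
    (p : ℝ) (hp : 2 < p)
    (mu : ℕ → ℝ) (hmu : ∀ k, 0 < mu k)
    (x s : ℕ → E)
    (hx : ∀ k, x (k + 1) = x k + s k)
    (hFpos : ∀ k, 0 < ‖F (x k)‖)
    (lam : ℕ → ℝ) (hlamdef : ∀ k, lam k = 2 * mu k * ‖F (x k)‖)
    (hopt : ∀ k,
      ‖ContinuousLinearMap.adjoint (J (x k)) (F (x k) + J (x k) (s k)) +
          (lam k * ‖s k‖ ^ (p - 2)) • s k‖ ≤ lam k / 2 * ‖s k‖ ^ (p - 1))
    (k : ℕ) (hk : 1 ≤ k)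
    (A : ℝ) (hA : A = 2 * ‖F (x 0)‖ + L * ∑ i ∈ Finset.range k, (L / mu i) ^ (2 / (p - 2))) :
    (Finset.Icc 1 k).inf' (Finset.nonempty_Icc.mpr hk)
        (fun i => ‖ContinuousLinearMap.adjoint (J (x i)) (F (x i))‖) ≤
      2 * A ^ (2 - 1 / p) / (k : ℝ) * (∑ i ∈ Finset.range k, mu i) ^ ((1 : ℝ) / p) +
        σ * A / (2 * (k : ℝ)) :=
  gn_rate_general_general F J hF L σ hL hlip hJbdd p hp mu hmu x s hx hFpos lam hlamdef hopt k hk A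
    hA
end
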